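/- For all nonnegative integers m, n, k, r with n ≥ m + k, one has C(m+k, m) · T_r(n+r, m+k+r) = ∑_{l=m}^{n-k} C(n,l) · T_r(l+r, m+r) · T(n-l, k). -/

import Mathlib

/-- The central factorial numbers of the second kind:
`T(n,k) = (1/k!) ∑_{j=0}^{k} (-1)^{k-j} C(k,j) (j - k/2)^n`. -/
noncomputable def centralT (n k : ℕ) : ℝ :=
  (1 / (Nat.factorial k : ℝ)) * ∑ j ∈ Finset.range (k + 1),
    (-1 : ℝ) ^ (k - j) * (Nat.choose k j : ℝ) * ((j : ℝ) - (k : ℝ) / 2) ^ n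

/-- The extended `r`-central factorial numbers of the second kind:
`T_r(n+r,k+r) = (1/k!) ∑_{j=0}^{k} (-1)^{k-j} C(k,j) (j + r - k/2)^n`. -/
noncomputable def rcentralT (r n k : ℕ) : ℝ :=
  (1 / (Nat.factorial k : ℝ)) * ∑ j ∈ Finset.range (k + 1),
    (-1 : ℝ) ^ (k - j) * (Nat.choose k j : ℝ) * ((j : ℝ) + (r : ℝ) - (k : ℝ) / 2) ^ n

/-!
With `Δ` the forward difference of step `1`, `T_r(n+r, k+r) = Δᵏ[(x + r - k/2)ⁿ](0) / k!` and
`T(n, k) = T_0(n, k)`. Expanding `(x + y + c + d)ⁿ` binomially in `x + c` and `y + d` and applying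
`Δᵐ` in `x` and `Δᵏ` in `y` gives `Δᵐ⁺ᵏ[(x + c + d)ⁿ](0)` as a binomial convolution, and
`(m+k)! / (m! k!) = C(m+k, m)` accounts for the factorials. The summands with `l < m` or
`n - l < k` vanish because `Δᴷ` kills polynomials of degree `< K`.
-/

open Finset Function Nat fwdDiff

section fwdDiff

variable {R : Type*} [CommRing R]

theorem fwdDiff_iter_one_eq_sum (f : R → R) (K : ℕ) (y : R) :
    Δ_[1] ^[K] f y = ∑ j ∈ range (K + 1), (-1) ^ (K - j) * K.choose j * f (y + j) := by
  rw [fwdDiff_iter_eq_sum_shift]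
  refine sum_congr rfl fun j _ ↦ ?_
  rw [zsmul_eq_mul, nsmul_one]
  push_cast
  ring

theorem fwdDiff_iter_add_pow_eq_zero_of_lt {j K : ℕ} (h : j < K) (c y : R) :
    Δ_[1] ^[K] (fun x ↦ (x + c) ^ j) y = 0 := by
  rw [fwdDiff_iter_comp_add (f := fun x ↦ x ^ j), fwdDiff_iter_pow_eq_zero_of_lt h, Pi.zero_apply]

theorem fwdDiff_iter_sum_mul {ι : Type*} (s : Finset ι) (a : ι → R) (f : ι → R → R)
    (K : ℕ) (y : R) :
    Δ_[1] ^[K] (fun x ↦ ∑ i ∈ s, a i * f i x) y = ∑ i ∈ s, a i * Δ_[1] ^[K] (f i) y := by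
  simp only [fwdDiff_iter_one_eq_sum, mul_sum]
  rw [sum_comm]
  exact sum_congr rfl fun _ _ ↦ sum_congr rfl fun _ _ ↦ by ring

theorem sum_choose_mul_fwdDiff_iter_add_pow (a b n : ℕ) (c d : R) :
    ∑ l ∈ range (n + 1), n.choose l * Δ_[1] ^[a] (fun x ↦ (x + c) ^ l) 0 *
        Δ_[1] ^[b] (fun y ↦ (y + d) ^ (n - l)) 0 =
      Δ_[1] ^[a + b] (fun x ↦ (x + (c + d)) ^ n) 0 := by
  have hsplit (x : R) : Δ_[1] ^[b] (fun y ↦ (y + x + (c + d)) ^ n) 0 =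
      ∑ l ∈ range (n + 1), n.choose l * (x + c) ^ l * Δ_[1] ^[b] (fun y ↦ (y + d) ^ (n - l)) 0 := by
    have : (fun y ↦ (y + x + (c + d)) ^ n) =
        fun y ↦ ∑ l ∈ range (n + 1), (n.choose l * (x + c) ^ l) * (y + d) ^ (n - l) := by
      funext y
      rw [show y + x + (c + d) = (x + c) + (y + d) by ring, add_pow]
      exact sum_congr rfl fun _ _ ↦ by ring
    rw [this, fwdDiff_iter_sum_mul]
  calc _ = Δ_[1] ^[a] (fun x ↦ ∑ l ∈ range (n + 1),
        (n.choose l * Δ_[1] ^[b] (fun y ↦ (y + d) ^ (n - l)) 0) * (x + c) ^ l) 0 := by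
        rw [fwdDiff_iter_sum_mul]
        exact sum_congr rfl fun _ _ ↦ by ring
    _ = Δ_[1] ^[a] (Δ_[1] ^[b] (fun x ↦ (x + (c + d)) ^ n)) 0 := by
        refine congrArg (fun f ↦ Δ_[1] ^[a] f 0) (funext fun x ↦ ?_)
        rw [← zero_add x, ← fwdDiff_iter_comp_add (f := fun x ↦ (x + (c + d)) ^ n), zero_add,
          hsplit]
        exact sum_congr rfl fun _ _ ↦ by ring
    _ = _ := by rw [iterate_add_apply]

end fwdDiff

theorem rcentralT_eq_fwdDiff_iter (r n k : ℕ) :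
    rcentralT r n k = Δ_[1] ^[k] (fun x : ℝ ↦ (x + (r - k / 2)) ^ n) 0 / k ! := by
  rw [rcentralT, fwdDiff_iter_one_eq_sum, one_div_mul_eq_div]
  congr 1
  exact sum_congr rfl fun j _ ↦ by ring_nf

theorem centralT_eq_rcentralT_zero (n k : ℕ) : centralT n k = rcentralT 0 n k := by
  simp [centralT, rcentralT]

theorem rcentralT_eq_zero_of_lt {n k : ℕ} (r : ℕ) (h : n < k) : rcentralT r n k = 0 := by
  rw [rcentralT_eq_fwdDiff_iter, fwdDiff_iter_add_pow_eq_zero_of_lt h, zero_div]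

theorem sum_range_choose_mul_rcentralT_mul_centralT (m n k r : ℕ) :
    ∑ l ∈ range (n + 1), (n.choose l : ℝ) * rcentralT r l m * centralT (n - l) k =
      (m + k).choose m * rcentralT r n (m + k) := by
  have hshift : (r : ℝ) - ↑(m + k) / 2 = ((r : ℝ) - m / 2) + ((0 : ℕ) - k / 2) := by
    push_cast; ring
  simp only [centralT_eq_rcentralT_zero, rcentralT_eq_fwdDiff_iter, hshift,
    ← sum_choose_mul_fwdDiff_iter_add_pow, cast_add_choose, sum_div]
  rw [mul_sum]
  refine sum_congr rfl fun l _ ↦ ?_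
  -- keep `field_simp` from rewriting inside the differenced functions
  generalize Δ_[(1 : ℝ)] ^[m] (_ : ℝ → ℝ) 0 = A
  generalize Δ_[(1 : ℝ)] ^[k] (_ : ℝ → ℝ) 0 = B
  field_simp

theorem choose_mul_rcentralT_eq_sum_general (m n k r : ℕ) :
    ((m + k).choose m : ℝ) * rcentralT r n (m + k) =
      ∑ l ∈ Finset.Icc m (n - k),
        (Nat.choose n l : ℝ) * rcentralT r l m * centralT (n - l) k := by
  rw [← sum_range_choose_mul_rcentralT_mul_centralT]
  refine (sum_subset (fun l hl ↦ ?_) fun l hl hl' ↦ ?_).symm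
  · simp only [mem_Icc, mem_range] at hl ⊢
    omega
  · simp only [mem_Icc, mem_range, not_and_or, not_le] at hl hl'
    rcases hl' with hlm | hlk
    · rw [rcentralT_eq_zero_of_lt r hlm, mul_zero, zero_mul]
    · rw [centralT_eq_rcentralT_zero, rcentralT_eq_zero_of_lt 0 (by omega), mul_zero]

/-- For all nonnegative integers `m, n, k, r` with `n ≥ m + k`:
`C(m+k,m) · T_r(n+r, m+k+r) = ∑_{l=m}^{n-k} C(n,l) · T_r(l+r, m+r) · T(n-l, k)`. -/
theorem choose_mul_rcentralT_eq_sum (m n k r : ℕ) (h : m + k ≤ n) :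
    ((m + k).choose m : ℝ) * rcentralT r n (m + k) =
      ∑ l ∈ Finset.Icc m (n - k),
        (Nat.choose n l : ℝ) * rcentralT r l m * centralT (n - l) k :=
  choose_mul_rcentralT_eq_sum_general m n k r
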